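/- For every positive integer n, a finite lattice L embeds into Co(P) for some poset P of length at most n if and only if L embeds into Co(Q) for some finite poset Q of length at most n. -/

import Mathlib

/-! Common definitions: lattices of order-convex subsets of a poset,
length of a poset, the identities (S), (U), (B), (L2), (H_n), (H_{m,n}),
join-irreducibility, the join-dependency relation, join-seeds,
the posets P_{I,J}, tree-like posets, D-closed sets,
and complete lattice congruences. -/

open Set

/-- The lattice `Co P` of all order-convex subsets of a poset `P`. -/
def Co (P : Type*) [PartialOrder P] : Type _ := {s : Set P // s.OrdConnected}

namespace Co

variable {P : Type*} [PartialOrder P]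

instance : PartialOrder (Co P) := Subtype.partialOrder _

instance : InfSet (Co P) :=
  ⟨fun S => ⟨⋂ s ∈ S, s.1, Set.ordConnected_biInter fun s _ => s.2⟩⟩

noncomputable instance : CompleteLattice (Co P) :=
  completeLatticeOfInf (Co P) (by
    intro S
    constructor
    · intro t ht
      exact Set.biInter_subset_of_mem (t := fun s => s.1) ht
    · intro b hb
      exact Set.subset_iInter₂ fun t ht => hb ht)

/-- The order-convex subset of `P` with underlying set `X`. -/
def mk' (X : Set P) (hX : X.OrdConnected) : Co P := ⟨X, hX⟩

/-- The singleton `{p}`, as an order-convex set. -/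
def sngl (p : P) : Co P := ⟨{p}, Set.ordConnected_singleton⟩

/-- The empty order-convex set. -/
def emp : Co P := ⟨∅, Set.ordConnected_empty⟩

end Co

/-- `lengthLE P n` states that the poset `P` has length at most `n`, that is,
every finite chain of `P` has at most `n + 1` elements. -/
def lengthLE (P : Type*) [PartialOrder P] (n : ℕ) : Prop :=
  ∀ C : Finset P, IsChain (· ≤ ·) (C : Set P) → C.card ≤ n + 1

section Identities

/-- The Stirlitz identity (S). -/
def IdS (L : Type*) [Lattice L] : Prop :=
  ∀ a b b₀ b₁ c : L,
    a ⊓ ((b ⊓ (b₀ ⊔ b₁)) ⊔ c) =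
      (a ⊓ (b ⊓ (b₀ ⊔ b₁)))
      ⊔ (a ⊓ (b₀ ⊔ c) ⊓ ((b ⊓ (b₀ ⊔ b₁) ⊓ (a ⊔ b₀)) ⊔ c))
      ⊔ (a ⊓ (b₁ ⊔ c) ⊓ ((b ⊓ (b₀ ⊔ b₁) ⊓ (a ⊔ b₁)) ⊔ c))

/-- The Udav identity (U). -/
def IdU (L : Type*) [Lattice L] : Prop :=
  ∀ x x₀ x₁ x₂ : L,
    x ⊓ (x₀ ⊔ x₁) ⊓ (x₁ ⊔ x₂) ⊓ (x₀ ⊔ x₂) =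
      (x ⊓ x₀ ⊓ (x₁ ⊔ x₂)) ⊔ (x ⊓ x₁ ⊓ (x₀ ⊔ x₂)) ⊔ (x ⊓ x₂ ⊓ (x₀ ⊔ x₁))

/-- The Bond identity (B). -/
def IdB (L : Type*) [Lattice L] : Prop :=
  ∀ x a₀ a₁ b₀ b₁ : L,
    x ⊓ (a₀ ⊔ a₁) ⊓ (b₀ ⊔ b₁) =
      (x ⊓ a₀ ⊓ (b₀ ⊔ b₁)) ⊔ (x ⊓ a₁ ⊓ (b₀ ⊔ b₁))
      ⊔ (x ⊓ b₀ ⊓ (a₀ ⊔ a₁)) ⊔ (x ⊓ b₁ ⊓ (a₀ ⊔ a₁))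
      ⊔ (x ⊓ (a₀ ⊔ a₁) ⊓ (b₀ ⊔ b₁) ⊓ (a₀ ⊔ b₀) ⊓ (a₁ ⊔ b₁))
      ⊔ (x ⊓ (a₀ ⊔ a₁) ⊓ (b₀ ⊔ b₁) ⊓ (a₀ ⊔ b₁) ⊓ (a₁ ⊔ b₀))

/-- The identity (L₂). -/
def IdL2 (L : Type*) [Lattice L] : Prop :=
  ∀ a b b' c c' : L,
    a ⊓ ((b ⊓ (c ⊔ c')) ⊔ b') =
      (a ⊓ b ⊓ (c ⊔ c')) ⊔ (a ⊓ ((b ⊓ c) ⊔ b')) ⊔ (a ⊓ ((b ⊓ c') ⊔ b'))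

variable {L : Type*} [Lattice L]

/-- The lattice polynomial `U_{i,n}` (in the variables `x₀, …, xₙ, x'₁, …, x'ₙ`). -/
def Upoly (x x' : ℕ → L) (n : ℕ) (i : ℕ) : L :=
  if h : n ≤ i then x n
  else x i ⊓ (Upoly x x' n (i + 1) ⊔ x' (i + 1))
  termination_by n - i
  decreasing_by omega

/-- The lattice polynomial `V_{i,j,n}`. -/
def Vpoly (x x' : ℕ → L) (n i : ℕ) (j : ℕ) : L :=
  if h : i ≤ j then (x i ⊓ Upoly x x' n (i + 1)) ⊔ (x i ⊓ x' (i + 1))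
  else x j ⊓ (Vpoly x x' n i (j + 1) ⊔ x' (j + 1))
  termination_by i - j
  decreasing_by omega

/-- The lattice polynomial `W_{i,j,n}`. -/
def Wpoly (x x' : ℕ → L) (n i : ℕ) (j : ℕ) : L :=
  if h : i ≤ j then
    x i ⊓ (x' (i + 1) ⊔ x' (i + 2)) ⊓ ((Upoly x x' n (i + 1) ⊓ (x i ⊔ x' (i + 2))) ⊔ x' (i + 1))
  else x j ⊓ (Wpoly x x' n i (j + 1) ⊔ x' (j + 1))
  termination_by i - j
  decreasing_by omega

/-- `bigJoin f k = f 0 ⊔ f 1 ⊔ ⋯ ⊔ f k`. -/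
def bigJoin (f : ℕ → L) : ℕ → L
  | 0 => f 0
  | k + 1 => bigJoin f k ⊔ f (k + 1)

end Identities

/-- The identity (Hₙ) : `Uₙ = ⋁_{0 ≤ i ≤ n-1} V_{i,n} ∨ ⋁_{0 ≤ i ≤ n-2} W_{i,n}`
(intended for `n ≥ 1`). -/
def IdH (n : ℕ) (L : Type*) [Lattice L] : Prop :=
  ∀ x x' : ℕ → L,
    Upoly x x' n 0 =
      bigJoin (fun i =>
        if i + 2 ≤ n then Vpoly x x' n i 0 ⊔ Wpoly x x' n i 0 else Vpoly x x' n i 0) (n - 1)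

/-- The identity (H_{m,n}) (intended for `m, n ≥ 1`); the common base point is
`x 0 = y 0 = t`. -/
def IdHmn (m n : ℕ) (L : Type*) [Lattice L] : Prop :=
  ∀ x x' y y' : ℕ → L, x 0 = y 0 →
    Upoly x x' m 0 ⊓ Upoly y y' n 0 =
      bigJoin (fun i =>
          if i + 2 ≤ m then
            (Vpoly x x' m i 0 ⊓ Upoly y y' n 0) ⊔ (Wpoly x x' m i 0 ⊓ Upoly y y' n 0)
          else Vpoly x x' m i 0 ⊓ Upoly y y' n 0) (m - 1)
      ⊔ bigJoin (fun j =>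
          if j + 2 ≤ n then
            (Upoly x x' m 0 ⊓ Vpoly y y' n j 0) ⊔ (Upoly x x' m 0 ⊓ Wpoly y y' n j 0)
          else Upoly x x' m 0 ⊓ Vpoly y y' n j 0) (n - 1)
      ⊔ (Upoly x x' m 0 ⊓ Upoly y y' n 0 ⊓ (x 1 ⊔ y' 1) ⊓ (x' 1 ⊔ y 1))

/-- `p` is join-irreducible: `p = x ⊔ y` implies `p = x` or `p = y`. -/
def JIrr {L : Type*} [Lattice L] (p : L) : Prop :=
  ∀ x y : L, p = x ⊔ y → p = x ∨ p = y

/-- The join-dependency relation `p D q`. -/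
def DRel {L : Type*} [Lattice L] (p q : L) : Prop :=
  p ≠ q ∧ ∃ x : L, p ≤ q ⊔ x ∧ ∀ y < q, ¬ p ≤ y ⊔ x

/-- A subset `S` of a lattice `L` is a join-seed. -/
def JoinSeed (L : Type*) [Lattice L] (S : Set L) : Prop :=
  (∀ p ∈ S, JIrr p) ∧
  (∀ a : L, ∃ T ⊆ S, IsLUB T a) ∧
  (∀ p ∈ S, ∀ a b : L, p ≤ a ⊔ b → ¬ p ≤ a → ¬ p ≤ b →
    ∃ x ∈ S, ∃ y ∈ S, x ≤ a ∧ y ≤ b ∧ p ≤ x ⊔ y ∧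
      (∀ x' < x, ¬ p ≤ x' ⊔ y) ∧ (∀ y' < y, ¬ p ≤ x ⊔ y'))

/-- The poset `P_{I,J} = I ∪ {p} ∪ J`, where every element of `I` is below `p`,
`p` is below every element of `J`, every element of `I` is below every element
of `J`, and there are no other strict comparabilities. -/
def PIJ (I J : Type*) : Type _ := I ⊕ (Unit ⊕ J)

namespace PIJ

variable {I J : Type*}

/-- The rank (height) of an element of `P_{I,J}`. -/
def rank (a : PIJ I J) : ℕ :=
  Sum.elim (fun _ => 0) (Sum.elim (fun _ => 1) fun _ => 2) a

instance : PartialOrder (PIJ I J) where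
  le a b := a = b ∨ rank a < rank b
  le_refl a := Or.inl rfl
  le_trans a b c hab hbc := by
    rcases hab with rfl | h
    · exact hbc
    · rcases hbc with rfl | h'
      · exact Or.inr h
      · exact Or.inr (h.trans h')
  le_antisymm a b hab hba := by
    rcases hab with rfl | h
    · rfl
    · rcases hba with rfl | h'
      · rfl
      · omega

end PIJ

/-- A poset is tree-like if it has no infinite bounded chain and between any two
points there is at most one repetition-free finite path with respect to the
covering relation. -/
def TreeLike (P : Type*) [PartialOrder P] : Prop :=
  (∀ C : Set P, IsChain (· ≤ ·) C → BddAbove C → BddBelow C → C.Finite) ∧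
  (∀ a b : P, ∀ l₁ l₂ : List P,
    l₁.Nodup → l₁.head? = some a → l₁.getLast? = some b →
      l₁.Chain' (fun u v => u ⋖ v ∨ v ⋖ u) →
    l₂.Nodup → l₂.head? = some a → l₂.getLast? = some b →
      l₂.Chain' (fun u v => u ⋖ v ∨ v ⋖ u) →
    l₁ = l₂)

/-- A subset `U` of a poset `P` is `D`-closed. -/
def DClosed {P : Type*} [PartialOrder P] (U : Set P) : Prop :=
  ∀ x p y : P, x < p → p < y → (x ∈ U ∨ y ∈ U) → p ∈ U

/-- A complete congruence of a complete lattice. -/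
structure IsCompleteCongr {L : Type*} [CompleteLattice L] (θ : L → L → Prop) : Prop where
  refl : ∀ x, θ x x
  symm : ∀ {x y}, θ x y → θ y x
  trans : ∀ {x y z}, θ x y → θ y z → θ x z
  sup : ∀ {a b c d}, θ a b → θ c d → θ (a ⊔ c) (b ⊔ d)
  inf : ∀ {a b c d}, θ a b → θ c d → θ (a ⊓ c) (b ⊓ d)
  cSup : ∀ (x : L) (Y : Set L), Y.Nonempty → (∀ y ∈ Y, θ x y) → θ x (sSup Y)
  cInf : ∀ (x : L) (Y : Set L), Y.Nonempty → (∀ y ∈ Y, θ x y) → θ x (sInf Y)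

/-- The map `h_U : Co(P) → Co(P ∖ U)`, `X ↦ X ∖ U`. -/
def coRestrict {P : Type*} [PartialOrder P] (U : Set P) (X : Co P) :
    Co {p : P // p ∉ U} :=
  ⟨Subtype.val ⁻¹' X.1, by
    constructor
    rintro a ha b hb z hz
    exact X.2.out ha hb ⟨hz.1, hz.2⟩⟩

/-- The lattice `D(P)` of all `D`-closed subsets of a poset `P`. -/
def DSub (P : Type*) [PartialOrder P] : Type _ := {U : Set P // DClosed U}

namespace DSub

variable {P : Type*} [PartialOrder P]

instance : PartialOrder (DSub P) := Subtype.partialOrder _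

instance : InfSet (DSub P) :=
  ⟨fun S => ⟨⋂ U ∈ S, U.1, by
    intro x p y h1 h2 h3
    simp only [Set.mem_iInter] at h3 ⊢
    intro U hU
    exact U.2 x p y h1 h2 (h3.imp (fun h => h U hU) fun h => h U hU)⟩⟩

noncomputable instance : CompleteLattice (DSub P) :=
  completeLatticeOfInf (DSub P) (by
    intro S
    constructor
    · intro t ht
      exact Set.biInter_subset_of_mem (t := fun U => U.1) ht
    · intro b hb
      exact Set.subset_iInter₂ fun t ht => hb ht)

end DSub

/-!
Let `f : L ↪ Co P` be a lattice embedding with `L` finite. Every point `z` covered by `f` has a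
least label `a` with `z ∈ f a`, and if `x ≤ z ≤ y` then the label of `z` is below the join of
the labels of `x` and `y`, because `f (label x ⊔ label y)` is convex. Replace each point by its
profile: its label, the labels of the points below and above it, and a rank in `{0, …, n}`,
which exists since `P` has length at most `n`. There are finitely many profiles, and the
profiles of points of `P` form a poset of length at most `n` on which `a ↦ {label ≤ a}` is again
a lattice embedding: convexity is inherited from the labels, and a join `f a ⊔ f b` is witnessed
by points of `f a ∪ f b` whose profiles surround the given one.
-/

theorem lengthLE.height_le {P : Type*} [PartialOrder P] {n : ℕ} (hP : lengthLE P n) (a : P) :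
    Order.height a ≤ n := by
  classical
  refine Order.height_le_iff.2 fun p _ => ?_
  have hchain : IsChain (· ≤ ·) ((Finset.univ.image p : Finset P) : Set P) := by
    simpa using p.strictMono.monotone.isChain_range
  have hcard := hP _ hchain
  rw [Finset.card_image_of_injective _ p.strictMono.injective, Finset.card_univ,
    Fintype.card_fin] at hcard
  exact_mod_cast (by omega : p.length ≤ n)

theorem lengthLE_iff_exists_strictMono_fin {P : Type*} [PartialOrder P] {n : ℕ} :
    lengthLE P n ↔ ∃ r : P → Fin (n + 1), StrictMono r := by
  classical
  constructor
  · intro hP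
    have height_ne_top (a : P) : Order.height a ≠ ⊤ :=
      ne_top_of_le_ne_top (by simp) (hP.height_le a)
    refine ⟨fun a => ⟨(Order.height a).toNat, Nat.lt_succ_of_le
      (ENat.toNat_le_of_le_natCast (hP.height_le a))⟩, fun x y hxy => ?_⟩
    have := Order.height_strictMono hxy (lt_top_iff_ne_top.2 (height_ne_top x))
    rw [← ENat.natCast_toNat (height_ne_top x), ← ENat.natCast_toNat (height_ne_top y)] at this
    exact Fin.mk_lt_mk.2 (by exact_mod_cast this)
  · rintro ⟨r, hr⟩ C hC
    have hinj : Set.InjOn r C := fun x hx y hy hxy => by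
      by_contra hne
      rcases hC hx hy hne with h | h
      · exact (hr (lt_of_le_of_ne h hne)).ne hxy
      · exact (hr (lt_of_le_of_ne h (Ne.symm hne))).ne' hxy
    rw [← Finset.card_image_of_injOn hinj]
    simpa using (C.image r).card_le_univ

namespace Co

variable {P : Type*} [PartialOrder P]

theorem mem_inf {X Y : Co P} {z : P} : z ∈ (X ⊓ Y).1 ↔ z ∈ X.1 ∧ z ∈ Y.1 := by
  show z ∈ ⋂ s ∈ ({X, Y} : Set (Co P)), s.1 ↔ _
  simp

theorem exists_le_le_of_mem_sup {X Y : Co P} {z : P} (hz : z ∈ (X ⊔ Y).1) :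
    ∃ x ∈ X.1 ∪ Y.1, ∃ y ∈ X.1 ∪ Y.1, x ≤ z ∧ z ≤ y := by
  let hull : Co P := ⟨{w | ∃ x ∈ X.1 ∪ Y.1, ∃ y ∈ X.1 ∪ Y.1, x ≤ w ∧ w ≤ y},
    ⟨fun _ ⟨x, hx, _, _, hxa, _⟩ _ ⟨_, _, y, hy, _, hby⟩ _ hw =>
      ⟨x, hx, y, hy, hxa.trans hw.1, hw.2.trans hby⟩⟩⟩
  have hle : X ⊔ Y ≤ hull := sup_le
    (fun w hw => ⟨w, .inl hw, w, .inl hw, le_rfl, le_rfl⟩)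
    (fun w hw => ⟨w, .inr hw, w, .inr hw, le_rfl, le_rfl⟩)
  exact hle hz

end Co

theorem exists_forall_le_iff_mem {L : Type*} [SemilatticeInf L] [Finite L] {S : Set L}
    (hne : S.Nonempty) (hinf : InfClosed S) (hup : IsUpperSet S) :
    ∃ a : L, ∀ b, a ≤ b ↔ b ∈ S := by
  have hfin := S.toFinite
  refine ⟨hfin.toFinset.inf' (by simpa using hne) id,
    fun b => ⟨fun h => hup h ?_, fun h => ?_⟩⟩
  · exact hinf.finsetInf'_mem _ fun i hi => by simpa using hi
  · exact Finset.inf'_le id (by simpa using h)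

structure Profile (α : Type*) (n : ℕ) where
  label : α
  below : Set α
  above : Set α
  height : Fin (n + 1)

namespace Profile

variable {α : Type*} {n : ℕ}

def Lt (p q : Profile α n) : Prop :=
  p.below ⊆ q.below ∧ q.above ⊆ p.above ∧ p.height < q.height

theorem Lt.trans {p q s : Profile α n} (hpq : p.Lt q) (hqs : q.Lt s) : p.Lt s :=
  ⟨hpq.1.trans hqs.1, hqs.2.1.trans hpq.2.1, hpq.2.2.trans hqs.2.2⟩

instance : PartialOrder (Profile α n) where
  le p q := p = q ∨ p.Lt q
  le_refl p := .inl rfl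
  le_trans p q s := by
    rintro (rfl | hpq) (rfl | hqs)
    exacts [.inl rfl, .inr hqs, .inr hpq, .inr (hpq.trans hqs)]
  le_antisymm p q := by
    rintro (rfl | hpq) (hqp | hqp)
    exacts [rfl, rfl, hqp.symm, absurd (hpq.2.2.trans hqp.2.2) (lt_irrefl _)]

theorem below_subset_of_le {p q : Profile α n} (h : p ≤ q) : p.below ⊆ q.below := by
  rcases h with rfl | h
  exacts [subset_rfl, h.1]

theorem above_subset_of_le {p q : Profile α n} (h : p ≤ q) : q.above ⊆ p.above := by
  rcases h with rfl | h
  exacts [subset_rfl, h.2.1]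

theorem Lt.lt {p q : Profile α n} (h : p.Lt q) : p < q :=
  lt_of_le_of_ne (.inr h) fun hpq => (hpq ▸ h.2.2).false

theorem height_strictMono : StrictMono (height : Profile α n → Fin (n + 1)) := by
  rintro p q ⟨rfl | h, hqp⟩
  exacts [(hqp (.inl rfl)).elim, h.2.2]

instance [Finite α] : Finite (Profile α n) :=
  Finite.of_injective (fun p => (p.label, p.below, p.above, p.height))
    fun ⟨_, _, _, _⟩ ⟨_, _, _, _⟩ h => by simp_all

end Profile

section FiniteModel

variable {L P : Type*} [Lattice L] [Finite L] [PartialOrder P] (f : LatticeHom L (Co P))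

def coSupport : Set P := {z | ∃ a, z ∈ (f a).1}

theorem exists_forall_le_iff_mem_apply (z : coSupport f) :
    ∃ a : L, ∀ b, a ≤ b ↔ z.1 ∈ (f b).1 :=
  exists_forall_le_iff_mem z.2
    (fun a ha b hb => by
      show z.1 ∈ (f (a ⊓ b)).1
      rw [map_inf, Co.mem_inf]
      exact ⟨ha, hb⟩)
    (fun a b hab ha => (OrderHomClass.mono f hab) ha)

noncomputable def leastLabel (z : coSupport f) : L :=
  Classical.choose (exists_forall_le_iff_mem_apply f z)

theorem leastLabel_le_iff (z : coSupport f) (a : L) : leastLabel f z ≤ a ↔ z.1 ∈ (f a).1 :=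
  Classical.choose_spec (exists_forall_le_iff_mem_apply f z) a

theorem leastLabel_le_sup {x z y : coSupport f} (hxz : x ≤ z) (hzy : z ≤ y) :
    leastLabel f z ≤ leastLabel f x ⊔ leastLabel f y := by
  rw [leastLabel_le_iff]
  exact (f _).2.out ((leastLabel_le_iff f x _).1 le_sup_left)
    ((leastLabel_le_iff f y _).1 le_sup_right) ⟨hxz, hzy⟩

theorem exists_le_le_of_leastLabel_le_sup {z : coSupport f} {a b : L}
    (h : leastLabel f z ≤ a ⊔ b) :
    ∃ x y : coSupport f, x ≤ z ∧ z ≤ y ∧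
      (leastLabel f x ≤ a ∨ leastLabel f x ≤ b) ∧
      (leastLabel f y ≤ a ∨ leastLabel f y ≤ b) := by
  rw [leastLabel_le_iff, map_sup] at h
  obtain ⟨x, hx, y, hy, hxz, hzy⟩ := Co.exists_le_le_of_mem_sup h
  have mem_support {w : P} (hw : w ∈ (f a).1 ∪ (f b).1) : w ∈ coSupport f :=
    hw.elim (⟨a, ·⟩) (⟨b, ·⟩)
  refine ⟨⟨x, mem_support hx⟩, ⟨y, mem_support hy⟩, hxz, hzy, ?_, ?_⟩ <;>
    simp only [leastLabel_le_iff]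
  exacts [hx, hy]

variable {n : ℕ} (r : coSupport f → Fin (n + 1))

noncomputable def coProfile (z : coSupport f) : Profile L n :=
  ⟨leastLabel f z, leastLabel f '' Iic z, leastLabel f '' Ici z, r z⟩

theorem coProfile_strictMono (hr : StrictMono r) : StrictMono (coProfile f r) := fun _ _ hxz =>
  Profile.Lt.lt
    ⟨image_mono (Iic_subset_Iic.2 hxz.le), image_mono (Ici_subset_Ici.2 hxz.le), hr hxz⟩

theorem ordConnected_label_le (a : L) :
    OrdConnected {q : range (coProfile f r) | q.1.label ≤ a} := by
  constructor
  rintro ⟨_, x₁, rfl⟩ hx₁ ⟨_, x₂, rfl⟩ hx₂ ⟨_, z, rfl⟩ ⟨hx₁z, hzx₂⟩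
  obtain ⟨x, hxz, hx⟩ : leastLabel f x₁ ∈ (coProfile f r z).below :=
    Profile.below_subset_of_le hx₁z ⟨x₁, le_rfl, rfl⟩
  obtain ⟨y, hzy, hy⟩ : leastLabel f x₂ ∈ (coProfile f r z).above :=
    Profile.above_subset_of_le hzx₂ ⟨x₂, le_rfl, rfl⟩
  exact (leastLabel_le_sup f hxz hzy).trans (sup_le (hx ▸ hx₁) (hy ▸ hx₂))

noncomputable def labelBelow (a : L) : Co (range (coProfile f r)) :=
  ⟨_, ordConnected_label_le f r a⟩

theorem labelBelow_mono : Monotone (labelBelow f r) := fun _ _ hab _ hq => le_trans hq hab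

theorem labelBelow_inf (a b : L) :
    labelBelow f r (a ⊓ b) = labelBelow f r a ⊓ labelBelow f r b := by
  refine le_antisymm (le_inf (labelBelow_mono f r inf_le_left) (labelBelow_mono f r inf_le_right))
    fun q hq => ?_
  obtain ⟨hqa, hqb⟩ := Co.mem_inf.1 hq
  exact le_inf hqa hqb

theorem labelBelow_sup (hr : StrictMono r) (a b : L) :
    labelBelow f r (a ⊔ b) = labelBelow f r a ⊔ labelBelow f r b := by
  refine le_antisymm ?_
    (sup_le (labelBelow_mono f r le_sup_left) (labelBelow_mono f r le_sup_right))
  rintro ⟨_, z, rfl⟩ hz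
  obtain ⟨x, y, hxz, hzy, hx, hy⟩ := exists_le_le_of_leastLabel_le_sup f hz
  have mem_sup (w : coSupport f) (hw : leastLabel f w ≤ a ∨ leastLabel f w ≤ b) :
      ⟨coProfile f r w, mem_range_self w⟩ ∈ (labelBelow f r a ⊔ labelBelow f r b).1 :=
    hw.elim (fun h => (le_sup_left : labelBelow f r a ≤ _) h)
      (fun h => (le_sup_right : labelBelow f r b ≤ _) h)
  have hmono := (coProfile_strictMono f r hr).monotone
  exact (labelBelow f r a ⊔ labelBelow f r b).2.out (mem_sup x hx) (mem_sup y hy)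
    ⟨hmono hxz, hmono hzy⟩

theorem le_of_labelBelow_le (hf : Function.Injective f) {a b : L}
    (h : labelBelow f r a ≤ labelBelow f r b) : a ≤ b := by
  have hfab : f a ≤ f b := fun z hz => by
    let w : coSupport f := ⟨z, a, hz⟩
    have hw : (⟨coProfile f r w, mem_range_self w⟩ : range (coProfile f r)) ∈
        (labelBelow f r a).1 :=
      (leastLabel_le_iff f w a).2 hz
    exact (leastLabel_le_iff f w b).1 (h hw)
  exact inf_eq_left.1 (hf (by rw [map_inf, inf_eq_left.2 hfab]))

noncomputable def labelBelowHom (hr : StrictMono r) :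
    LatticeHom L (Co (range (coProfile f r))) where
  toFun := labelBelow f r
  map_sup' := labelBelow_sup f r hr
  map_inf' := labelBelow_inf f r

theorem labelBelowHom_injective (hr : StrictMono r) (hf : Function.Injective f) :
    Function.Injective (labelBelowHom f r hr) := fun _ _ h =>
  le_antisymm (le_of_labelBelow_le f r hf h.le) (le_of_labelBelow_le f r hf h.ge)

end FiniteModel

theorem stmt7.{u} (n : ℕ) (hn : 0 < n) (L : Type u) [Lattice L] [Finite L] :
    (∃ (P : Type u) (_ : PartialOrder P), lengthLE P n ∧
      ∃ f : LatticeHom L (Co P), Function.Injective f) ↔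
    (∃ (Q : Type u) (_ : PartialOrder Q), Finite Q ∧ lengthLE Q n ∧
      ∃ f : LatticeHom L (Co Q), Function.Injective f) := by
  refine ⟨fun ⟨P, _, hP, f, hf⟩ => ?_,
    fun ⟨Q, _, _, hQ, g, hg⟩ => ⟨Q, _, hQ, g, hg⟩⟩
  obtain ⟨r, hr⟩ := lengthLE_iff_exists_strictMono_fin.1 hP
  have hr' : StrictMono (r ∘ Subtype.val : coSupport f → Fin (n + 1)) :=
    hr.comp (Subtype.strictMono_coe _)
  have hlength : lengthLE (range (coProfile f (r ∘ Subtype.val))) n :=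
    lengthLE_iff_exists_strictMono_fin.2
      ⟨fun q => q.1.height, Profile.height_strictMono.comp (Subtype.strictMono_coe _)⟩
  exact ⟨_, inferInstance, inferInstance, hlength, labelBelowHom f _ hr',
    labelBelowHom_injective f _ hr' hf⟩
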